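/- arXiv:1008.5383 — 2 statements merged into one kernel-verified Lean document; each statement's English description precedes it below -/
import Mathlib

section
/- Let (X, R) be an s-class Q-polynomial association scheme with respect to the ordering E_0, E_1, ..., E_s, with m = rank(E_1), and let l = max{k : q_{1,0}^0 = q_{1,1}^1 = ⋯ = q_{1,k}^k = 0}. If l ≤ (s-2)/2, then |X| ≤ C(m+s-1, s). -/
open Matrix Finset

/-- The all-ones matrix. -/
def allOnes (X : Type*) : Matrix X X ℝ := Matrix.of fun _ _ => (1 : ℝ)

section

variable {X : Type*} [Fintype X] [DecidableEq X]

/-- `A 0, …, A s` are the adjacency matrices of a symmetric association scheme of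
class `s` on `X`. -/
structure IsAssocScheme (s : ℕ) (A : ℕ → Matrix X X ℝ) : Prop where
  zero_one : ∀ i ≤ s, ∀ x y, A i x y = 0 ∨ A i x y = 1
  nonempty : ∀ i ≤ s, A i ≠ 0
  eq_one : A 0 = 1
  sum_eq : ∑ i ∈ Finset.range (s + 1), A i = allOnes X
  symm : ∀ i ≤ s, (A i)ᵀ = A i
  mul_closed : ∀ i ≤ s, ∀ j ≤ s, ∃ p : ℕ → ℝ,
    A i * A j = ∑ k ∈ Finset.range (s + 1), p k • A k

/-- `E 0, …, E s` are the primitive idempotents of the scheme, with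
`E 0 = |X|⁻¹ J`. -/
structure IsPrimIdem (s : ℕ) (A E : ℕ → Matrix X X ℝ) : Prop where
  symm : ∀ i ≤ s, (E i).IsSymm
  mem_span : ∀ i ≤ s, ∃ q : ℕ → ℝ, E i = ∑ k ∈ Finset.range (s + 1), q k • A k
  orth_idem : ∀ i ≤ s, ∀ j ≤ s, E i * E j = if i = j then E i else 0
  sum_eq : ∑ i ∈ Finset.range (s + 1), E i = 1
  zero_eq : E 0 = (Fintype.card X : ℝ)⁻¹ • allOnes X

/-- `q` is the family of Krein parameters:
`E i ∘ E j = |X|⁻¹ ∑_k q i j k • E k` (entrywise product). -/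
def IsKrein (s : ℕ) (E : ℕ → Matrix X X ℝ) (q : ℕ → ℕ → ℕ → ℝ) : Prop :=
  ∀ i ≤ s, ∀ j ≤ s, Matrix.hadamard (E i) (E j) =
    (Fintype.card X : ℝ)⁻¹ • ∑ k ∈ Finset.range (s + 1), q i j k • E k

/-- The scheme is `Q`-polynomial with respect to the ordering `E 0, …, E s`:
`q 1 j k > 0` for `k = j ± 1` and `q 1 j k = 0` for `|k - j| > 1`. -/
def IsQPoly (s : ℕ) (q : ℕ → ℕ → ℕ → ℝ) : Prop :=
  (∀ j ≤ s, ∀ k ≤ s, (k = j + 1 ∨ j = k + 1) → 0 < q 1 j k) ∧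
  (∀ j ≤ s, ∀ k ≤ s, (j + 1 < k ∨ k + 1 < j) → q 1 j k = 0)

end

/-!
Let `U ⊆ ℝ^X` be the column space of `E 1`, so `dim U = m`, and view `ℝ^X` as an algebra under
pointwise multiplication. The columns of the Hadamard power `E₁^{∘d}` are `d`-th powers of columns
of `E 1`, so they lie in `U^d`, which is spanned by the `C(m+d-1, d)` monomials of degree `d` in a
basis of `U`. Since `E 1` has constant diagonal `c ≠ 0`, `1 = c⁻¹ ∑_z (E₁ e_z)²` lies in `U²`, so
`U^d ≤ U^s` whenever `d ≤ s` and `d ≡ s (mod 2)`.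

Write `E₁^{∘d} = ∑ₖ c_d(k) Eₖ`. The Krein relation gives `c_{d+1}(k) = |X|⁻¹ ∑ⱼ c_d(j) q₁ⱼᵏ`, and
the Krein parameters are nonnegative (Schur product theorem), so `c_d(k) > 0` as soon as `k` is
reached from `0` by a walk of length `d` along the edges `q₁ⱼᵏ > 0`. These edges contain the path
`0 – 1 – ⋯ – s` and a loop at `l + 1`; the loop changes parity, and `2(l + 1) ≤ s` makes every
`k ≤ s` reachable in some `d ≤ s` with `d ≡ s`. Then `Eₖ = c_d(k)⁻¹ E₁^{∘d} Eₖ` has its columns in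
`U^s`, and `∑ₖ Eₖ = I` forces `U^s = ℝ^X`.
-/

open scoped Pointwise

theorem Set.range_pow_subset_range_sym_prod {M ι : Type*} [CommMonoid M] (f : ι → M) (n : ℕ) :
    Set.range f ^ n ⊆ Set.range fun μ : Sym ι n => ((μ : Multiset ι).map f).prod := by
  induction n with
  | zero => rintro _ rfl; exact ⟨Sym.nil, by simp⟩
  | succ n ih =>
    rw [pow_succ]
    rintro _ ⟨_, hx, _, ⟨i, rfl⟩, rfl⟩
    obtain ⟨μ, rfl⟩ := ih hx
    exact ⟨i ::ₛ μ, by simp [Sym.coe_cons, mul_comm]⟩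

namespace Submodule

variable {K A : Type*} [Field K] [CommRing A] [Algebra K A]

theorem finrank_span_range_pow_le_choose {ι : Type*} [Fintype ι] (f : ι → A) (n : ℕ) :
    Module.finrank K ↥(span K (Set.range f) ^ n) ≤ (Fintype.card ι + n - 1).choose n := by
  classical
  calc Module.finrank K ↥(span K (Set.range f) ^ n)
      ≤ (Set.range fun μ : Sym ι n => ((μ : Multiset ι).map f).prod).finrank K := by
        rw [span_pow]
        have := FiniteDimensional.span_of_finite K
          (Set.finite_range fun μ : Sym ι n => ((μ : Multiset ι).map f).prod)
        exact Submodule.finrank_mono (span_mono (Set.range_pow_subset_range_sym_prod f n))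
    _ ≤ Fintype.card (Sym ι n) := finrank_range_le_card _
    _ = (Fintype.card ι + n - 1).choose n := Sym.card_sym_eq_choose n

theorem finrank_pow_le_choose (U : Submodule K A) [FiniteDimensional K U] (n : ℕ) :
    Module.finrank K ↥(U ^ n) ≤ (Module.finrank K U + n - 1).choose n := by
  set b := Module.finBasis K U
  have hU : span K (Set.range fun i => (b i : A)) = U := by
    rw [show (Set.range fun i => (b i : A)) = U.subtype '' Set.range b from (Set.range_comp _ _),
      span_image, b.span_eq, map_top, range_subtype]
  have h := finrank_span_range_pow_le_choose (K := K) (fun i => (b i : A)) n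
  rwa [hU, Fintype.card_fin] at h

theorem pow_le_pow_add_two_mul {U : Submodule K A} (h : (1 : A) ∈ U ^ 2) (d e : ℕ) :
    U ^ d ≤ U ^ (d + 2 * e) := by
  induction e with
  | zero => rfl
  | succ e ih =>
    calc U ^ d ≤ U ^ (d + 2 * e) * 1 := (mul_one (U ^ (d + 2 * e))).symm ▸ ih
      _ ≤ U ^ (d + 2 * e) * U ^ 2 := mul_le_mul_right (one_le.mpr h) _
      _ = U ^ (d + 2 * (e + 1)) := by rw [← pow_add]; ring_nf

end Submodule

namespace Matrix

section hadamardPow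

variable {m n R : Type*}

def hadamardPow [Monoid R] (M : Matrix m n R) (d : ℕ) : Matrix m n R := of fun i j => M i j ^ d

theorem hadamardPow_zero [Monoid R] (M : Matrix m n R) :
    M.hadamardPow 0 = of fun _ _ => 1 := by
  ext; simp [hadamardPow]

theorem hadamardPow_succ [CommMonoid R] (M : Matrix m n R) (d : ℕ) :
    M.hadamardPow (d + 1) = M ⊙ M.hadamardPow d := by
  ext; simp [hadamardPow, pow_succ, mul_comm]

theorem range_mulVecLin_hadamardPow_le [CommRing R] [Fintype n] [DecidableEq n]
    (M : Matrix m n R) (d : ℕ) :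
    LinearMap.range (M.hadamardPow d).mulVecLin ≤ LinearMap.range M.mulVecLin ^ d := by
  rw [range_mulVecLin, Submodule.span_le]
  rintro _ ⟨y, rfl⟩
  have hcol : M.col y ∈ LinearMap.range M.mulVecLin := ⟨Pi.single y 1, mulVec_single_one M y⟩
  exact Submodule.pow_mem_pow _ hcol d

end hadamardPow

variable {X : Type*} [Fintype X]

theorem range_mulVecLin_le_of_mul_eq_smul {R : Type*} [Field R] {M F : Matrix X X R} {c : R}
    (h : M * F = c • F) (hc : c ≠ 0) :
    LinearMap.range F.mulVecLin ≤ LinearMap.range M.mulVecLin := by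
  rintro _ ⟨u, rfl⟩
  refine ⟨c⁻¹ • F *ᵥ u, ?_⟩
  simp [mulVec_mulVec, h, smul_mulVec, smul_smul, inv_mul_cancel₀ hc]

theorem one_mem_range_mulVecLin_sq [DecidableEq X] {M : Matrix X X ℝ} {c : ℝ} (hs : M.IsSymm)
    (hi : M * M = M) (hM : M ≠ 0) (hc : ∀ x, M x x = c) :
    (1 : X → ℝ) ∈ LinearMap.range M.mulVecLin ^ 2 := by
  have hc0 : c ≠ 0 := by
    rintro rfl
    apply hM
    rw [← trace_conjTranspose_mul_self_eq_zero_iff, conjTranspose_eq_transpose_of_trivial, hs.eq,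
      hi]
    simp [trace, hc]
  have hsq : (1 : X → ℝ) = c⁻¹ • ∑ y, M.col y ^ 2 := by
    ext x
    have hrow : ∑ y, M x y * M x y = c := by
      rw [← hc x, ← congrFun (congrFun hi x) x, mul_apply]
      exact Finset.sum_congr rfl fun y _ => by rw [hs.apply]
    simp [sq, hrow, inv_mul_cancel₀ hc0]
  rw [hsq]
  refine Submodule.smul_mem _ _ (Submodule.sum_mem _ fun y _ => Submodule.pow_mem_pow _ ?_ 2)
  exact ⟨Pi.single y 1, mulVec_single_one M y⟩

theorem IsSymm.posSemidef_of_mul_self_eq {M : Matrix X X ℝ} (hs : M.IsSymm)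
    (hi : M * M = M) : M.PosSemidef := by
  have h : Mᴴ * M = M := by rw [conjTranspose_eq_transpose_of_trivial, hs.eq, hi]
  exact h ▸ posSemidef_conjTranspose_mul_self M

theorem PosSemidef.nonneg_of_mul_eq_smul [DecidableEq X] {P F : Matrix X X ℝ} {c : ℝ}
    (hP : P.PosSemidef) (h : P * F = c • F) (hF : F ≠ 0) : 0 ≤ c := by
  obtain ⟨x, y, hxy⟩ : ∃ x y, F x y ≠ 0 := by
    by_contra! h0; exact hF (ext h0)
  have hv : F.col y ≠ 0 := fun h0 => hxy (congrFun h0 x)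
  have hPv : P *ᵥ F.col y = c • F.col y := by
    rw [← mulVec_single_one, mulVec_mulVec, h, smul_mulVec]
  have h1 := hP.dotProduct_mulVec_nonneg (F.col y)
  rw [hPv, dotProduct_smul, smul_eq_mul] at h1
  exact nonneg_of_mul_nonneg_left h1 (dotProduct_star_self_pos_iff.mpr hv)

end Matrix

inductive ReachableIn (r : ℕ → ℕ → Prop) : ℕ → ℕ → Prop
  | zero : ReachableIn r 0 0
  | step {d j k : ℕ} : ReachableIn r d j → r j k → ReachableIn r (d + 1) k

namespace ReachableIn

variable {r : ℕ → ℕ → Prop}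

theorem up {d i : ℕ} (h : ReachableIn r d i) :
    ∀ n : ℕ, (∀ t < n, r (i + t) (i + t + 1)) → ReachableIn r (d + n) (i + n)
  | 0, _ => h
  | n + 1, hr => (h.up n fun t ht => hr t (by omega)).step (hr n (by omega))

theorem down {i : ℕ} :
    ∀ {d : ℕ} (n : ℕ), ReachableIn r d (i + n) → (∀ t < n, r (i + t + 1) (i + t)) →
      ReachableIn r (d + n) i
  | _, 0, h, _ => h
  | d, n + 1, h, hr => by
    have h' := (h.step (hr n (by omega))).down n fun t ht => hr t (by omega)
    rwa [Nat.add_right_comm, Nat.add_assoc] at h'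

theorem exists_of_path_of_loop {s a : ℕ} (hup : ∀ j < s, r j (j + 1))
    (hdown : ∀ j < s, r (j + 1) j) (hloop : r a a) (ha : 2 * a ≤ s) {k : ℕ} (hk : k ≤ s) :
    ∃ d e, d + 2 * e = s ∧ ReachableIn r d k := by
  have hzero : ∀ n ≤ s, ReachableIn r n n := fun n hn => by
    simpa using zero.up n fun t ht => by simpa using hup t (by omega)
  have hloopR : ReachableIn r (a + 1) a := (hzero a (by omega)).step hloop
  by_cases hpar : k % 2 = s % 2
  · exact ⟨k, (s - k) / 2, by omega, hzero k hk⟩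
  by_cases hak : a ≤ k
  · obtain ⟨n, rfl⟩ : ∃ n, k = a + n := ⟨k - a, by omega⟩
    exact ⟨a + 1 + n, (s - (a + 1 + n)) / 2, by omega,
      hloopR.up n fun t ht => hup (a + t) (by omega)⟩
  · obtain ⟨n, rfl⟩ : ∃ n, a = k + n := ⟨a - k, by omega⟩
    exact ⟨k + n + 1 + n, (s - (k + n + 1 + n)) / 2, by omega,
      hloopR.down n fun t ht => hdown (k + t) (by omega)⟩

end ReachableIn

noncomputable def hadamardPowCoeff (s i : ℕ) (q : ℕ → ℕ → ℕ → ℝ) (N : ℝ) : ℕ → ℕ → ℝ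
  | 0, k => if k = 0 then N else 0
  | d + 1, k => N⁻¹ * ∑ j ∈ range (s + 1), hadamardPowCoeff s i q N d j * q i j k

section hadamardPowCoeff

variable {s i : ℕ} {q : ℕ → ℕ → ℕ → ℝ} {N : ℝ}

theorem hadamardPowCoeff_nonneg (hN : 0 ≤ N) (hq : ∀ j ≤ s, ∀ k ≤ s, 0 ≤ q i j k) :
    ∀ d, ∀ k ≤ s, 0 ≤ hadamardPowCoeff s i q N d k
  | 0, k, _ => by unfold hadamardPowCoeff; split_ifs <;> simp [hN]
  | d + 1, k, hk => mul_nonneg (inv_nonneg.mpr hN) <| Finset.sum_nonneg fun j hj => by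
    have hjs : j ≤ s := by simp at hj; omega
    exact mul_nonneg (hadamardPowCoeff_nonneg hN hq d j hjs) (hq j hjs k hk)

theorem hadamardPowCoeff_pos (hN : 0 < N) (hq : ∀ j ≤ s, ∀ k ≤ s, 0 ≤ q i j k) {d k : ℕ}
    (h : ReachableIn (fun j k => j ≤ s ∧ k ≤ s ∧ 0 < q i j k) d k) :
    0 < hadamardPowCoeff s i q N d k := by
  induction h with
  | zero => simp [hadamardPowCoeff, hN]
  | @step d j k _ hjk ih =>
    refine mul_pos (inv_pos.mpr hN) (Finset.sum_pos' (fun j' hj' => ?_) ?_)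
    · have hj's : j' ≤ s := by simp at hj'; omega
      exact mul_nonneg (hadamardPowCoeff_nonneg hN.le hq d j' hj's) (hq j' hj's k hjk.2.1)
    · exact ⟨j, mem_range.mpr (by omega), mul_pos ih hjk.2.2⟩

end hadamardPowCoeff

theorem IsQPoly.exists_reachableIn {s : ℕ} {q : ℕ → ℕ → ℕ → ℝ} (hQ : IsQPoly s q) {a : ℕ}
    (hloop : 0 < q 1 a a) (ha : 2 * a ≤ s) {k : ℕ} (hk : k ≤ s) :
    ∃ d e, d + 2 * e = s ∧ ReachableIn (fun j k => j ≤ s ∧ k ≤ s ∧ 0 < q 1 j k) d k :=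
  ReachableIn.exists_of_path_of_loop
    (fun j hj => ⟨hj.le, hj, hQ.1 j hj.le (j + 1) hj (Or.inl rfl)⟩)
    (fun j hj => ⟨hj, hj.le, hQ.1 (j + 1) hj j hj.le (Or.inr rfl)⟩)
    ⟨by omega, by omega, hloop⟩ ha hk

section Scheme

variable {X : Type*} [Fintype X] [DecidableEq X] {s : ℕ} {A E : ℕ → Matrix X X ℝ}
  {q : ℕ → ℕ → ℕ → ℝ}

theorem IsAssocScheme.apply_self_eq_zero (hA : IsAssocScheme s A) {k : ℕ} (h1 : 1 ≤ k)
    (hk : k ≤ s) (x : X) : A k x x = 0 := by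
  have hsum : ∑ i ∈ range s, A (i + 1) x x + A 0 x x = 1 := by
    rw [← Finset.sum_range_succ' (fun i => A i x x), ← Matrix.sum_apply, hA.sum_eq]
    rfl
  rw [hA.eq_one, one_apply_eq, add_eq_right, Finset.sum_eq_zero_iff_of_nonneg] at hsum
  · obtain ⟨i, rfl⟩ : ∃ i, k = i + 1 := ⟨k - 1, by omega⟩
    exact hsum i (mem_range.mpr (by omega))
  · intro i hi
    rcases hA.zero_one (i + 1) (by simp at hi; omega) x x with h | h <;> simp [h]

namespace IsPrimIdem

variable (hE : IsPrimIdem s A E)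
include hE

theorem mul_self {j : ℕ} (hj : j ≤ s) : E j * E j = E j := by
  simpa using hE.orth_idem j hj j hj

theorem sum_smul_mul (a : ℕ → ℝ) {j : ℕ} (hj : j ≤ s) :
    (∑ k ∈ range (s + 1), a k • E k) * E j = a j • E j := by
  rw [Finset.sum_mul, Finset.sum_eq_single_of_mem j (mem_range.mpr (by omega))]
  · rw [smul_mul, hE.mul_self hj]
  · intro k hk hkj
    rw [smul_mul, hE.orth_idem k (by simp at hk; omega) j hj, if_neg hkj, smul_zero]

theorem exists_diag_eq (hA : IsAssocScheme s A) {j : ℕ} (hj : j ≤ s) :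
    ∃ c, ∀ x, E j x x = c := by
  obtain ⟨a, ha⟩ := hE.mem_span j hj
  refine ⟨a 0, fun x => ?_⟩
  rw [ha, Matrix.sum_apply, Finset.sum_eq_single_of_mem 0 (mem_range.mpr (by omega))]
  · simp [hA.eq_one]
  · intro k hk hk0
    have hks : k ≤ s := by simp at hk; omega
    simp [hA.apply_self_eq_zero (Nat.one_le_iff_ne_zero.mpr hk0) hks x]

theorem eq_top_of_range_le {P : Submodule ℝ (X → ℝ)}
    (h : ∀ k ≤ s, LinearMap.range (E k).mulVecLin ≤ P) : P = ⊤ := by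
  refine eq_top_iff.mpr fun v _ => ?_
  rw [← one_mulVec v, ← hE.sum_eq, sum_mulVec]
  exact P.sum_mem fun k hk => h k (by simp at hk; omega) ⟨v, rfl⟩

end IsPrimIdem

theorem IsKrein.hadamard_mul (hK : IsKrein s E q) (hE : IsPrimIdem s A E) {i j k : ℕ}
    (hi : i ≤ s) (hj : j ≤ s) (hk : k ≤ s) :
    (E i ⊙ E j) * E k = ((Fintype.card X : ℝ)⁻¹ * q i j k) • E k := by
  rw [hK i hi j hj, smul_mul, hE.sum_smul_mul _ hk, smul_smul]

theorem IsKrein.nonneg [Nonempty X] (hK : IsKrein s E q) (hE : IsPrimIdem s A E) {i j k : ℕ}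
    (hi : i ≤ s) (hj : j ≤ s) (hk : k ≤ s) (hEk : E k ≠ 0) : 0 ≤ q i j k := by
  have hP := ((hE.symm i hi).posSemidef_of_mul_self_eq (hE.mul_self hi)).hadamard
    ((hE.symm j hj).posSemidef_of_mul_self_eq (hE.mul_self hj))
  have h := hP.nonneg_of_mul_eq_smul (hK.hadamard_mul hE hi hj hk) hEk
  exact nonneg_of_mul_nonneg_right h (by simp [Fintype.card_pos])

theorem IsPrimIdem.ne_zero_of_isQPoly [Nonempty X] (hE : IsPrimIdem s A E)
    (hK : IsKrein s E q) (hQ : IsQPoly s q) (h1 : 1 ≤ s) : ∀ j ≤ s, E j ≠ 0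
  | 0, _, h0 => by
    obtain ⟨x⟩ := ‹Nonempty X›
    have hx := congrFun (congrFun hE.zero_eq x) x
    simp only [h0, allOnes, Matrix.zero_apply, Matrix.smul_apply, of_apply, smul_eq_mul,
      mul_one] at hx
    exact inv_ne_zero (Nat.cast_ne_zero.mpr Fintype.card_ne_zero) hx.symm
  | n + 1, hn, h0 => by
    -- `E (n + 1) = 0` kills the `E n`-component `|X|⁻¹ q 1 (n + 1) n > 0` of `E 1 ⊙ E (n + 1)`.
    have h := hK.hadamard_mul hE h1 hn (k := n) (by omega)
    rw [h0, hadamard_zero, zero_mul, eq_comm, smul_eq_zero] at h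
    have hq := hQ.1 (n + 1) hn n (by omega) (Or.inr rfl)
    exact h.elim (fun hcoeff => by simp [Fintype.card_ne_zero] at hcoeff; exact hq.ne' hcoeff)
      (hE.ne_zero_of_isQPoly hK hQ h1 n (by omega))

theorem IsPrimIdem.hadamardPow_eq_sum [Nonempty X] (hE : IsPrimIdem s A E)
    (hK : IsKrein s E q) {i : ℕ} (hi : i ≤ s) :
    ∀ d, (E i).hadamardPow d =
      ∑ k ∈ range (s + 1), hadamardPowCoeff s i q (Fintype.card X) d k • E k
  | 0 => by
    have hN : (Fintype.card X : ℝ) ≠ 0 := Nat.cast_ne_zero.mpr Fintype.card_ne_zero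
    simp only [hadamardPowCoeff, ite_smul, zero_smul, Finset.sum_ite_eq', mem_range,
      Nat.zero_lt_succ, if_true, hE.zero_eq, smul_smul, mul_inv_cancel₀ hN, one_smul]
    rw [hadamardPow_zero]; rfl
  | d + 1 => by
    have hdist : ∀ c : ℕ → ℝ, E i ⊙ ∑ j ∈ range (s + 1), c j • E j =
        ∑ j ∈ range (s + 1), c j • (E i ⊙ E j) := fun c => by
      ext; simp [Matrix.sum_apply, Finset.mul_sum, mul_left_comm]
    rw [hadamardPow_succ, hE.hadamardPow_eq_sum hK hi d, hdist]
    rw [Finset.sum_congr rfl fun j hj => by rw [hK i hi j (by simp at hj; omega)]]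
    simp_rw [Finset.smul_sum, smul_smul, hadamardPowCoeff, Finset.mul_sum, Finset.sum_smul]
    rw [Finset.sum_comm]
    refine Finset.sum_congr rfl fun k _ => Finset.sum_congr rfl fun j _ => ?_
    ring_nf

theorem IsPrimIdem.hadamardPow_mul [Nonempty X] (hE : IsPrimIdem s A E) (hK : IsKrein s E q)
    {i k : ℕ} (hi : i ≤ s) (hk : k ≤ s) (d : ℕ) :
    (E i).hadamardPow d * E k = hadamardPowCoeff s i q (Fintype.card X) d k • E k := by
  rw [hE.hadamardPow_eq_sum hK hi, hE.sum_smul_mul _ hk]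

end Scheme

theorem card_le_QPoly_small_l_general (X : Type*) [Fintype X] [DecidableEq X] (s : ℕ)
    (A E : ℕ → Matrix X X ℝ) (q : ℕ → ℕ → ℕ → ℝ)
    (hA : IsAssocScheme s A) (hE : IsPrimIdem s A E)
    (hK : IsKrein s E q) (hQ : IsQPoly s q)
    (l : ℕ) (hmax : q 1 (l + 1) (l + 1) ≠ 0)
    (hl : 2 * l + 2 ≤ s) :
    Fintype.card X ≤ ((E 1).rank + s - 1).choose s := by
  cases isEmpty_or_nonempty X
  · simp
  have hs : 1 ≤ s := by omega
  have hE0 := hE.ne_zero_of_isQPoly hK hQ hs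
  have hq : ∀ j ≤ s, ∀ k ≤ s, 0 ≤ q 1 j k := fun j hj k hk =>
    hK.nonneg hE hs hj hk (hE0 k hk)
  set U := LinearMap.range (E 1).mulVecLin
  have hone : (1 : X → ℝ) ∈ U ^ 2 := by
    obtain ⟨c, hc⟩ := hE.exists_diag_eq hA hs
    exact one_mem_range_mulVecLin_sq (hE.symm 1 hs) (hE.mul_self hs) (hE0 1 hs) hc
  have hrange : ∀ k ≤ s, LinearMap.range (E k).mulVecLin ≤ U ^ s := by
    intro k hk
    obtain ⟨d, e, hde, hd⟩ :=
      hQ.exists_reachableIn ((hq _ (by omega) _ (by omega)).lt_of_ne' hmax) (by omega) hk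
    have hpos := hadamardPowCoeff_pos (N := Fintype.card X) (by simp [Fintype.card_pos]) hq hd
    calc LinearMap.range (E k).mulVecLin
        ≤ LinearMap.range ((E 1).hadamardPow d).mulVecLin :=
          range_mulVecLin_le_of_mul_eq_smul (hE.hadamardPow_mul hK hs hk d) hpos.ne'
      _ ≤ U ^ d := range_mulVecLin_hadamardPow_le _ _
      _ ≤ U ^ s := hde ▸ Submodule.pow_le_pow_add_two_mul hone d e
  calc Fintype.card X = Module.finrank ℝ (⊤ : Submodule ℝ (X → ℝ)) := by simp
    _ = Module.finrank ℝ ↥(U ^ s) := by rw [hE.eq_top_of_range_le hrange]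
    _ ≤ ((E 1).rank + s - 1).choose s := Submodule.finrank_pow_le_choose U s

/-- Let `(X, R)` be an `s`-class `Q`-polynomial scheme, `m = rank (E 1)`, and
`l = max{k : q 1 0 0 = ⋯ = q 1 k k = 0}`.  If `l ≤ (s - 2)/2` then
`|X| ≤ C(m + s - 1, s)`. -/
theorem card_le_QPoly_small_l (X : Type*) [Fintype X] [DecidableEq X] (s : ℕ) (hs : 1 ≤ s)
    (A E : ℕ → Matrix X X ℝ) (q : ℕ → ℕ → ℕ → ℝ)
    (hA : IsAssocScheme s A) (hE : IsPrimIdem s A E)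
    (hK : IsKrein s E q) (hQ : IsQPoly s q)
    (l : ℕ) (ha : ∀ k ≤ l, q 1 k k = 0) (hmax : q 1 (l + 1) (l + 1) ≠ 0)
    (hl : 2 * l + 2 ≤ s) :
    Fintype.card X ≤ ((E 1).rank + s - 1).choose s :=
  card_le_QPoly_small_l_general X s A E q hA hE hK hQ l hmax hl
end

section
/- Let (X, R) be an s-class Q-polynomial association scheme with m = rank(E_1) and l = max{k : q_{1,0}^0 = ⋯ = q_{1,k}^k = 0}. If (s-1)/2 ≤ l ≤ s-1, then |X| ≤ C(m+2l-s, 2l+1-s) + C(m+s-1, s). -/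
open Matrix Finset

/-!
Since `E₁ ∘ Eⱼ = |X|⁻¹ ∑ₖ q₁ⱼᵏ Eₖ` with all `q₁ⱼᵏ ≥ 0` (Schur product theorem), the
Hadamard power `E₁^{∘h}` is a combination of the `Eₖ` with nonnegative coefficients, positive
on every `k` reachable from `0` by a walk of length `h` in the graph joining `j` to `k` when
`q₁ⱼᵏ > 0`. This graph contains the path `0 — 1 — ⋯ — s` and a loop at `l + 1`. With
`h₁ = 2l + 1 - s`, every `k` is reached in `h₁` steps (if `k ≤ h₁`, `k ≡ h₁ mod 2`) or in
`s` steps (directly if `k ≡ s`, through the loop otherwise). Splitting `I = ∑ₖ Eₖ`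
accordingly, `|X| ≤ rank E₁^{∘h₁} + rank E₁^{∘s}`, and `rank M^{∘h} ≤ C(rank M + h - 1, h)`
because the columns of `M^{∘h}` are products of `h` columns of `M`.
-/

open scoped Pointwise

theorem Matrix.rank_add_le {m n K : Type*} [Fintype n] [Field K] (A B : Matrix m n K) :
    (A + B).rank ≤ A.rank + B.rank := by
  unfold Matrix.rank
  rw [Matrix.mulVecLin_add]
  exact (Submodule.finrank_mono (LinearMap.range_add_le _ _)).trans
    (Submodule.finrank_add_le_finrank_add_finrank _ _)

theorem Matrix.PosSemidef.nonneg_of_smul {n : Type*} [Fintype n] {P : Matrix n n ℝ}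
    (hP : P.PosSemidef) (hP0 : P ≠ 0) {c : ℝ} (hcP : (c • P).PosSemidef) : 0 ≤ c := by
  have htrace : 0 < P.trace := hP.trace_nonneg.lt_of_ne' (mt hP.trace_eq_zero_iff.mp hP0)
  have := hcP.trace_nonneg
  rw [trace_smul, smul_eq_mul] at this
  exact nonneg_of_mul_nonneg_left this htrace

theorem Set.pow_range_subset_range_sym {ι M : Type*} [CommMonoid M] (u : ι → M) (h : ℕ) :
    Set.range u ^ h ⊆ Set.range fun σ : Sym ι h => (σ.1.map u).prod := by
  induction h with
  | zero => simpa using ⟨Sym.nil, rfl⟩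
  | succ h ih =>
    rw [pow_succ']
    rintro _ ⟨_, ⟨i, rfl⟩, _, hx, rfl⟩
    obtain ⟨σ, rfl⟩ := ih hx
    exact ⟨i ::ₛ σ, by simp [Sym.coe_cons]⟩

theorem Submodule.finrank_pow_le {K R : Type*} [Field K] [CommRing R] [Algebra K R]
    (V : Submodule K R) [FiniteDimensional K V] (h : ℕ) :
    Module.finrank K ↥(V ^ h) ≤ (Module.finrank K V).multichoose h := by
  let b := Module.finBasis K V
  have hV : span K (Set.range fun i => (b i : R)) = V := by
    rw [show (Set.range fun i => (b i : R)) = V.subtype '' Set.range b by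
        rw [← Set.range_comp]; rfl,
      ← Submodule.map_span, b.span_eq, Submodule.map_top, Submodule.range_subtype]
  rw [← hV, Submodule.span_pow]
  have := FiniteDimensional.span_of_finite K <| Set.finite_range
    fun σ : Sym (Fin (Module.finrank K V)) h => (σ.1.map fun i => (b i : R)).prod
  refine (Submodule.finrank_mono (span_mono (Set.pow_range_subset_range_sym _ h))).trans ?_
  refine (finrank_range_le_card _).trans ?_
  rw [Sym.card_sym_eq_multichoose, Fintype.card_fin, hV]

theorem Matrix.rank_map_pow_le {m n K : Type*} [Finite m] [Fintype n] [Field K]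
    (M : Matrix m n K) (h : ℕ) : (M.map (· ^ h)).rank ≤ M.rank.multichoose h := by
  rw [Matrix.rank_eq_finrank_span_cols, Matrix.rank_eq_finrank_span_cols]
  refine le_trans (Submodule.finrank_mono ?_) (Submodule.finrank_pow_le _ h)
  rw [Submodule.span_le]
  rintro _ ⟨j, rfl⟩
  exact Submodule.pow_mem_pow _ (Submodule.subset_span (Set.mem_range_self j)) h

inductive KreinReachable (s : ℕ) (q : ℕ → ℕ → ℕ → ℝ) : ℕ → ℕ → Prop
  | zero : KreinReachable s q 0 0
  | step {h j k : ℕ} : KreinReachable s q h j → k ≤ s → 0 < q 1 j k →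
      KreinReachable s q (h + 1) k

namespace KreinReachable

variable {s : ℕ} {q : ℕ → ℕ → ℕ → ℝ} {h j k : ℕ}

theorem le (hr : KreinReachable s q h k) : k ≤ s := by
  cases hr with
  | zero => exact Nat.zero_le s
  | step _ hk _ => exact hk

theorem succ (hQ : IsQPoly s q) (hr : KreinReachable s q h j) (hj : j + 1 ≤ s) :
    KreinReachable s q (h + 1) (j + 1) :=
  hr.step hj (hQ.1 j (by omega) (j + 1) hj (Or.inl rfl))

theorem pred (hQ : IsQPoly s q) (hr : KreinReachable s q h (j + 1)) :
    KreinReachable s q (h + 1) j :=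
  have hj := hr.le
  hr.step (by omega) (hQ.1 (j + 1) hj j (by omega) (Or.inr rfl))

theorem walk_up (hQ : IsQPoly s q) (hr : KreinReachable s q h j) :
    ∀ d, j + d ≤ s → KreinReachable s q (h + d) (j + d)
  | 0, _ => hr
  | d + 1, hd => (walk_up hQ hr d (by omega)).succ hQ hd

theorem walk_down (hQ : IsQPoly s q) :
    ∀ {h : ℕ} d, KreinReachable s q h (j + d) → KreinReachable s q (h + d) j
  | _, 0, hr => hr
  | h, d + 1, hr => by
    rw [← add_assoc] at hr
    have hr' := walk_down hQ d (hr.pred hQ)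
    rwa [show h + 1 + d = h + (d + 1) by omega] at hr'

theorem add_two (hQ : IsQPoly s q) (hs : 1 ≤ s) (hr : KreinReachable s q h k) :
    KreinReachable s q (h + 2) k := by
  by_cases hk : k + 1 ≤ s
  · exact (hr.succ hQ hk).pred hQ
  · obtain ⟨j, rfl⟩ : ∃ j, k = j + 1 := ⟨k - 1, by omega⟩
    exact (hr.pred hQ).succ hQ hr.le

theorem add_two_mul (hQ : IsQPoly s q) (hs : 1 ≤ s) (hr : KreinReachable s q h k) :
    ∀ t, KreinReachable s q (h + 2 * t) k
  | 0 => hr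
  | t + 1 => (add_two_mul hQ hs hr t).add_two hQ hs

theorem of_le_of_mod_two_eq (hQ : IsQPoly s q) (hs : 1 ≤ s) (hk : k ≤ s) (hkh : k ≤ h)
    (hpar : h % 2 = k % 2) : KreinReachable s q h k := by
  have hkk : KreinReachable s q k k := by simpa using zero.walk_up hQ k (by simpa using hk)
  have hr := hkk.add_two_mul hQ hs ((h - k) / 2)
  rwa [show k + 2 * ((h - k) / 2) = h by omega] at hr

theorem loop {l : ℕ} (hQ : IsQPoly s q) (hl : l + 1 ≤ s) (hloop : 0 < q 1 (l + 1) (l + 1)) :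
    KreinReachable s q (l + 2) (l + 1) := by
  have hup := zero.walk_up hQ (l + 1) (by simpa using hl)
  rw [zero_add] at hup
  exact hup.step hl hloop

theorem loop_or_mod_two (hQ : IsQPoly s q) (hs : 1 ≤ s) {l : ℕ} (hl1 : s ≤ 2 * l + 1)
    (hl2 : l + 1 ≤ s) (hloop : 0 < q 1 (l + 1) (l + 1)) (hk : k ≤ s) :
    KreinReachable s q (2 * l + 1 - s) k ∨ KreinReachable s q s k := by
  by_cases hpar : s % 2 = k % 2
  · exact .inr (of_le_of_mod_two_eq hQ hs hk hk hpar)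
  by_cases hkh : k ≤ 2 * l + 1 - s
  · exact .inl (of_le_of_mod_two_eq hQ hs hk hkh (by omega))
  right
  by_cases hkl : l + 1 ≤ k
  · obtain ⟨d, rfl⟩ := Nat.exists_eq_add_of_le hkl
    have hr := ((loop hQ hl2 hloop).walk_up hQ d hk).add_two_mul hQ hs ((s - (l + 2 + d)) / 2)
    rwa [show l + 2 + d + 2 * ((s - (l + 2 + d)) / 2) = s by omega] at hr
  · obtain ⟨d, hd⟩ : ∃ d, l + 1 = k + d := ⟨l + 1 - k, by omega⟩
    have hr := (walk_down hQ d (hd ▸ loop hQ hl2 hloop)).add_two_mul hQ hs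
      ((s - (l + 2 + d)) / 2)
    rwa [show l + 2 + d + 2 * ((s - (l + 2 + d)) / 2) = s by omega] at hr

end KreinReachable

section Krein

variable {X : Type*} [Fintype X] {s : ℕ} {E : ℕ → Matrix X X ℝ} {q : ℕ → ℕ → ℕ → ℝ}

theorem IsKrein.hadamard_sum_smul (hK : IsKrein s E q) {i : ℕ} (hi : i ≤ s) (c : ℕ → ℝ) :
    E i ⊙ ∑ j ∈ range (s + 1), c j • E j =
      ∑ k ∈ range (s + 1),
        ((Fintype.card X : ℝ)⁻¹ * ∑ j ∈ range (s + 1), c j * q i j k) • E k := by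
  calc E i ⊙ ∑ j ∈ range (s + 1), c j • E j = ∑ j ∈ range (s + 1), c j • (E i ⊙ E j) := by
        ext x y
        simp [Matrix.sum_apply, Finset.mul_sum, mul_left_comm]
    _ = ∑ j ∈ range (s + 1), c j • ((Fintype.card X : ℝ)⁻¹ •
          ∑ k ∈ range (s + 1), q i j k • E k) :=
        sum_congr rfl fun j hj => by rw [hK i hi j (mem_range_succ_iff.mp hj)]
    _ = _ := by
        simp only [Finset.smul_sum, smul_smul, Finset.sum_smul, Finset.mul_sum]
        rw [Finset.sum_comm]
        exact sum_congr rfl fun k _ => sum_congr rfl fun j _ => by ring_nf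

end Krein

section Scheme

variable {X : Type*} [Fintype X] [DecidableEq X] {s : ℕ} {A E : ℕ → Matrix X X ℝ}
  {q : ℕ → ℕ → ℕ → ℝ}

namespace IsPrimIdem

theorem mul_sum_smul (hE : IsPrimIdem s A E) {k : ℕ} (hk : k ≤ s) (c : ℕ → ℝ) :
    E k * ∑ j ∈ range (s + 1), c j • E j = c k • E k := by
  rw [Finset.mul_sum, Finset.sum_eq_single_of_mem k (mem_range.mpr (by omega))]
  · rw [mul_smul_comm, hE.orth_idem k hk k hk, if_pos rfl]
  · intro j hj hjk
    rw [mul_smul_comm, hE.orth_idem k hk j (mem_range_succ_iff.mp hj), if_neg (Ne.symm hjk),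
      smul_zero]

theorem posSemidef (hE : IsPrimIdem s A E) {k : ℕ} (hk : k ≤ s) : (E k).PosSemidef := by
  have hEk : E k = (E k)ᴴ * E k := by
    rw [conjTranspose_eq_transpose_of_trivial, (hE.symm k hk).eq, hE.orth_idem k hk k hk,
      if_pos rfl]
  rw [hEk]
  exact posSemidef_conjTranspose_mul_self _

theorem rank_sum_le_rank (hE : IsPrimIdem s A E) {S : Finset ℕ} (hS : S ⊆ range (s + 1))
    {c : ℕ → ℝ} (hc : ∀ k ∈ S, c k ≠ 0) :
    (∑ k ∈ S, E k).rank ≤ (∑ j ∈ range (s + 1), c j • E j).rank := by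
  have hinv : (∑ k ∈ S, (c k)⁻¹ • E k) * ∑ j ∈ range (s + 1), c j • E j = ∑ k ∈ S, E k := by
    rw [Finset.sum_mul]
    refine Finset.sum_congr rfl fun k hk => ?_
    rw [smul_mul_assoc, hE.mul_sum_smul (mem_range_succ_iff.mp (hS hk)), smul_smul,
      inv_mul_cancel₀ (hc k hk), one_smul]
  rw [← hinv]
  exact rank_mul_le_right _ _

end IsPrimIdem

namespace IsKrein

theorem mul_hadamard_mul (hK : IsKrein s E q) (hE : IsPrimIdem s A E) {i j k : ℕ} (hi : i ≤ s)
    (hj : j ≤ s) (hk : k ≤ s) :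
    E k * (E i ⊙ E j) * E k = ((Fintype.card X : ℝ)⁻¹ * q i j k) • E k := by
  rw [hK i hi j hj, mul_smul_comm, hE.mul_sum_smul hk, smul_mul_assoc, smul_mul_assoc,
    hE.orth_idem k hk k hk, if_pos rfl, smul_smul]

theorem nonneg_s18 (hK : IsKrein s E q) (hE : IsPrimIdem s A E) {i j k : ℕ} (hi : i ≤ s)
    (hj : j ≤ s) (hk : k ≤ s) (hEk : E k ≠ 0) : 0 ≤ q i j k := by
  have : Nonempty X := by
    by_contra hX
    rw [not_nonempty_iff] at hX
    exact hEk (Subsingleton.elim _ _)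
  have hpsd : (((Fintype.card X : ℝ)⁻¹ * q i j k) • E k).PosSemidef := by
    rw [← hK.mul_hadamard_mul hE hi hj hk]
    simpa [(hE.symm k hk).eq] using
      ((hE.posSemidef hi).hadamard (hE.posSemidef hj)).mul_mul_conjTranspose_same (E k)
  exact (mul_nonneg_iff_of_pos_left (by positivity)).mp
    ((hE.posSemidef hk).nonneg_of_smul hEk hpsd)

end IsKrein

theorem IsPrimIdem.ne_zero [Nonempty X] (hE : IsPrimIdem s A E) (hK : IsKrein s E q)
    (hQ : IsQPoly s q) : ∀ {k : ℕ}, k ≤ s → E k ≠ 0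
  | 0, _ => by
    obtain ⟨x⟩ := ‹Nonempty X›
    rw [hE.zero_eq]
    refine smul_ne_zero (by positivity) fun hJ => ?_
    simpa [allOnes] using congrFun (congrFun hJ x) x
  | k + 1, hk => fun hEk => by
    have hcompress := hK.mul_hadamard_mul hE (i := 1) (j := k + 1) (k := k) (by omega) hk
      (by omega)
    rw [hEk, hadamard_zero, Matrix.mul_zero, Matrix.zero_mul, eq_comm, smul_eq_zero] at hcompress
    refine IsPrimIdem.ne_zero hE hK hQ (k := k) (by omega) (hcompress.resolve_left ?_)
    exact mul_ne_zero (by positivity) (hQ.1 (k + 1) hk k (by omega) (Or.inr rfl)).ne'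

theorem IsKrein.exists_map_pow_eq_sum [Nonempty X] (hK : IsKrein s E q) (hE : IsPrimIdem s A E)
    (hs : 1 ≤ s) (hq : ∀ j ≤ s, ∀ k ≤ s, 0 ≤ q 1 j k) :
    ∀ h : ℕ, ∃ c : ℕ → ℝ, (E 1).map (· ^ h) = ∑ k ∈ range (s + 1), c k • E k ∧
      (∀ k ≤ s, 0 ≤ c k) ∧ ∀ k, KreinReachable s q h k → 0 < c k
  | 0 => by
    refine ⟨fun k => if k = 0 then (Fintype.card X : ℝ) else 0, ?_, ?_, ?_⟩ <;> dsimp only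
    · rw [sum_eq_single_of_mem 0 (by simp) fun k _ hk => by simp [hk], if_pos rfl, hE.zero_eq,
        smul_smul, mul_inv_cancel₀ (by positivity), one_smul]
      ext x y
      simp [allOnes]
    · intro k _
      split_ifs <;> positivity
    · rintro k ⟨⟩
      simpa using Fintype.card_pos
  | h + 1 => by
    obtain ⟨c, hc, hc_nonneg, hc_pos⟩ := hK.exists_map_pow_eq_sum hE hs hq h
    have hsucc : (E 1).map (· ^ (h + 1)) = E 1 ⊙ (E 1).map (· ^ h) := by
      ext x y
      simp [pow_succ']
    have hterm : ∀ k ≤ s, ∀ j ∈ range (s + 1), 0 ≤ c j * q 1 j k := fun k hk j hj =>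
      mul_nonneg (hc_nonneg j (mem_range_succ_iff.mp hj)) (hq j (mem_range_succ_iff.mp hj) k hk)
    refine ⟨_, by rw [hsucc, hc, hK.hadamard_sum_smul hs c], fun k hk =>
      mul_nonneg (by positivity) (sum_nonneg (hterm k hk)), ?_⟩
    intro k hr
    obtain _ | @⟨_, j, _, hr, hk, hjk⟩ := hr
    exact mul_pos (by positivity) (sum_pos' (hterm k hk)
      ⟨j, mem_range_succ_iff.mpr hr.le, mul_pos (hc_pos j hr) hjk⟩)

theorem IsPrimIdem.rank_sum_le_rank_map_pow [Nonempty X] (hE : IsPrimIdem s A E)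
    (hK : IsKrein s E q) (hQ : IsQPoly s q) (hs : 1 ≤ s) {h : ℕ} {S : Finset ℕ}
    (hS : ∀ k ∈ S, KreinReachable s q h k) :
    (∑ k ∈ S, E k).rank ≤ ((E 1).map (· ^ h)).rank := by
  have hq : ∀ j ≤ s, ∀ k ≤ s, 0 ≤ q 1 j k := fun j hj k hk =>
    hK.nonneg_s18 hE hs hj hk (hE.ne_zero hK hQ hk)
  obtain ⟨c, hc, -, hc_pos⟩ := hK.exists_map_pow_eq_sum hE hs hq h
  rw [hc]
  exact hE.rank_sum_le_rank (fun k hk => mem_range_succ_iff.mpr (hS k hk).le)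
    fun k hk => (hc_pos k (hS k hk)).ne'

end Scheme

theorem card_le_QPoly_large_l_general (X : Type*) [Fintype X] [DecidableEq X] (s : ℕ) (hs : 1 ≤ s)
    (A E : ℕ → Matrix X X ℝ) (q : ℕ → ℕ → ℕ → ℝ)
    (hE : IsPrimIdem s A E)
    (hK : IsKrein s E q) (hQ : IsQPoly s q)
    (l : ℕ) (hmax : q 1 (l + 1) (l + 1) ≠ 0)
    (hl1 : s ≤ 2 * l + 1) (hl2 : l + 1 ≤ s) :
    Fintype.card X ≤ ((E 1).rank + 2 * l - s).choose (2 * l + 1 - s) +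
      ((E 1).rank + s - 1).choose s := by
  classical
  obtain _ | _ := isEmpty_or_nonempty X
  · simp
  have hloop : 0 < q 1 (l + 1) (l + 1) :=
    (hK.nonneg_s18 hE hs hl2 hl2 (hE.ne_zero hK hQ hl2)).lt_of_ne' hmax
  set S := (range (s + 1)).filter (KreinReachable s q (2 * l + 1 - s))
  set T := (range (s + 1)).filter fun k => ¬KreinReachable s q (2 * l + 1 - s) k
  have hT : ∀ k ∈ T, KreinReachable s q s k := fun k hk => by
    obtain ⟨hk, hk_not⟩ := mem_filter.mp hk
    exact (KreinReachable.loop_or_mod_two hQ hs hl1 hl2 hloop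
      (mem_range_succ_iff.mp hk)).resolve_left hk_not
  calc Fintype.card X = ((∑ k ∈ S, E k) + ∑ k ∈ T, E k).rank := by
        rw [sum_filter_add_sum_filter_not, hE.sum_eq, rank_one]
    _ ≤ ((E 1).map (· ^ (2 * l + 1 - s))).rank + ((E 1).map (· ^ s)).rank :=
        (rank_add_le _ _).trans (add_le_add
          (hE.rank_sum_le_rank_map_pow hK hQ hs fun k hk => (mem_filter.mp hk).2)
          (hE.rank_sum_le_rank_map_pow hK hQ hs hT))
    _ ≤ (E 1).rank.multichoose (2 * l + 1 - s) + (E 1).rank.multichoose s :=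
        add_le_add (rank_map_pow_le _ _) (rank_map_pow_le _ _)
    _ = _ := by
        rw [Nat.multichoose_eq, Nat.multichoose_eq]
        congr 2
        omega

/-- Let `(X, R)` be an `s`-class `Q`-polynomial scheme, `m = rank (E 1)`, and
`l = max{k : q 1 0 0 = ⋯ = q 1 k k = 0}`.  If `(s - 1)/2 ≤ l ≤ s - 1` then
`|X| ≤ C(m + 2l - s, 2l + 1 - s) + C(m + s - 1, s)`. -/
theorem card_le_QPoly_large_l (X : Type*) [Fintype X] [DecidableEq X] (s : ℕ) (hs : 1 ≤ s)
    (A E : ℕ → Matrix X X ℝ) (q : ℕ → ℕ → ℕ → ℝ)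
    (hA : IsAssocScheme s A) (hE : IsPrimIdem s A E)
    (hK : IsKrein s E q) (hQ : IsQPoly s q)
    (l : ℕ) (ha : ∀ k ≤ l, q 1 k k = 0) (hmax : q 1 (l + 1) (l + 1) ≠ 0)
    (hl1 : s ≤ 2 * l + 1) (hl2 : l + 1 ≤ s) :
    Fintype.card X ≤ ((E 1).rank + 2 * l - s).choose (2 * l + 1 - s) +
      ((E 1).rank + s - 1).choose s :=
  card_le_QPoly_large_l_general X s hs A E q hE hK hQ l hmax hl1 hl2
end
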